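/- Let t > 0 and γ = i·t. Then the map z ↦ conj(z) + 1/2 induces an anti-holomorphic involution of X_γ (namely x ↦ p(1/2) + σ(x), where σ is induced by conjugation), and this involution has no fixed points. (This is the fixed-point-free involution t_{1/2} ∘ α_{(−,1)} of region A, of topological type (0,1), a Klein bottle.) -/

import Mathlib

open Complex

/-- The lattice `Λ_γ ⊆ ℂ` generated by `1` and `γ`. -/
noncomputable def Lambda (γ : ℂ) : AddSubgroup ℂ := AddSubgroup.closure {1, γ}

/-- The complex torus `X_γ = ℂ / Λ_γ`. -/
abbrev XTorus (γ : ℂ) := ℂ ⧸ Lambda γ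

/-- The quotient map `p : ℂ → X_γ`. -/
noncomputable def tproj (γ : ℂ) : ℂ → XTorus γ := QuotientAddGroup.mk

/-!
Conjugation preserves the rectangular lattice `Λ = ℤ + ℤ i t`, so it descends to an additive
involution `σ` of `X = ℂ / Λ`, and `τ = p(1/2) + σ` satisfies `τ ∘ τ = p(1/2 + 1/2) + id = id`.
A fixed point `p z` of `τ` would put `conj z + 1/2 - z` in `Λ`; its real part `1/2` would then
be an integer.
-/

lemma mem_Lambda_iff (γ z : ℂ) :
    z ∈ Lambda γ ↔ ∃ m n : ℤ, (m : ℂ) + (n : ℂ) * γ = z := by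
  rw [Lambda, AddSubgroup.mem_closure_pair]
  simp [zsmul_eq_mul]

lemma one_mem_Lambda (γ : ℂ) : (1 : ℂ) ∈ Lambda γ :=
  AddSubgroup.subset_closure (Set.mem_insert 1 {γ})

lemma tproj_add (γ a b : ℂ) : tproj γ (a + b) = tproj γ a + tproj γ b :=
  rfl

lemma tproj_eq_tproj_iff (γ a b : ℂ) : tproj γ a = tproj γ b ↔ -a + b ∈ Lambda γ :=
  QuotientAddGroup.eq

section RectangularLattice

variable (t : ℝ)

lemma conj_mem_Lambda_I_mul {z : ℂ} (hz : z ∈ Lambda (I * t)) :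
    starRingEnd ℂ z ∈ Lambda (I * t) := by
  obtain ⟨m, n, rfl⟩ := (mem_Lambda_iff _ _).1 hz
  exact (mem_Lambda_iff _ _).2 ⟨m, -n, by simp⟩

lemma exists_int_eq_re_of_mem_Lambda_I_mul {z : ℂ} (hz : z ∈ Lambda (I * t)) :
    ∃ m : ℤ, z.re = m := by
  obtain ⟨m, n, rfl⟩ := (mem_Lambda_iff _ _).1 hz
  exact ⟨m, by simp⟩

noncomputable def torusConj : XTorus (I * t) →+ XTorus (I * t) :=
  QuotientAddGroup.map _ _ (starRingEnd ℂ).toAddMonoidHom fun _ hz => conj_mem_Lambda_I_mul t hz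

lemma torusConj_tproj (z : ℂ) :
    torusConj t (tproj (I * t) z) = tproj (I * t) (starRingEnd ℂ z) :=
  rfl

lemma torusConj_involutive : Function.Involutive (torusConj t) := by
  intro x
  induction x using QuotientAddGroup.induction_on with
  | H z => exact congrArg (tproj (I * t)) (conj_conj z)

noncomputable def kleinInvolution (x : XTorus (I * t)) : XTorus (I * t) :=
  tproj (I * t) (1 / 2) + torusConj t x

lemma kleinInvolution_tproj (z : ℂ) :
    kleinInvolution t (tproj (I * t) z) = tproj (I * t) (starRingEnd ℂ z + 1 / 2) := by
  rw [kleinInvolution, torusConj_tproj, ← tproj_add, add_comm]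

lemma kleinInvolution_involutive : Function.Involutive (kleinInvolution t) := by
  intro x
  have half_add_half : tproj (I * t) (1 / 2) + torusConj t (tproj (I * t) (1 / 2)) = 0 := by
    rw [torusConj_tproj, ← tproj_add, map_div₀, map_one, map_ofNat, add_halves, tproj,
      QuotientAddGroup.eq_zero_iff]
    exact one_mem_Lambda (I * t)
  rw [kleinInvolution, kleinInvolution, map_add, torusConj_involutive, ← add_assoc,
    half_add_half, zero_add]

lemma kleinInvolution_ne_self (x : XTorus (I * t)) : kleinInvolution t x ≠ x := by
  induction x using QuotientAddGroup.induction_on with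
  | H z =>
    rw [← tproj, kleinInvolution_tproj, Ne, tproj_eq_tproj_iff]
    intro hmem
    obtain ⟨m, hm⟩ := exists_int_eq_re_of_mem_Lambda_I_mul t hmem
    have re_eq : (-(starRingEnd ℂ z + 1 / 2) + z).re = -(1 / 2) := by simp
    have two_mul_eq : (2 * m : ℤ) = -1 := by
      have : ((2 * m : ℤ) : ℝ) = -1 := by push_cast; linarith
      exact_mod_cast this
    omega

end RectangularLattice

theorem klein_bottle_involution_no_fixed_points_general (t : ℝ) :
    ∃ τ : XTorus (Complex.I * t) → XTorus (Complex.I * t),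
      (∀ z : ℂ, τ (tproj (Complex.I * t) z) = tproj (Complex.I * t) (starRingEnd ℂ z + 1 / 2)) ∧
      (∀ x, τ (τ x) = x) ∧
      (∀ x, τ x ≠ x) :=
  ⟨kleinInvolution t, kleinInvolution_tproj t, kleinInvolution_involutive t,
    kleinInvolution_ne_self t⟩

/-- For `γ = i t` with `t > 0` (region `A`): the map `z ↦ conj z + 1/2` induces an
anti-holomorphic involution of `X_γ` which has no fixed points (the quotient is a
Klein bottle, topological type `(0,1)`). -/
theorem klein_bottle_involution_no_fixed_points (t : ℝ) (ht : 0 < t) :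
    ∃ τ : XTorus (Complex.I * t) → XTorus (Complex.I * t),
      (∀ z : ℂ, τ (tproj (Complex.I * t) z) = tproj (Complex.I * t) (starRingEnd ℂ z + 1 / 2)) ∧
      (∀ x, τ (τ x) = x) ∧
      (∀ x, τ x ≠ x) :=
  klein_bottle_involution_no_fixed_points_general t
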